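/- Let L be a bounded distributive lattice and f: L^n → L an aggregation function. Then f is a discrete Sugeno integral (equal to Su_m for some L-valued capacity m) if and only if f is Boolean sup-homogeneous and Boolean inf-homogeneous (i.e., f(c ∨ x) = c ∨ f(x) and f(c ∧ x) = c ∧ f(x) for all x ∈ {0,1}^n ⊆ L^n and all constant vectors c). -/

import Mathlib

/-!
If `f = Su_m`, distributivity lets a constant `c` pass through the lattice polynomial `Su_m`;
the terms it creates are absorbed thanks to `m [n] = ⊤` (for `c ⊔ ·`) and `m ∅ = ⊥` (for `c ⊓ ·`).

Conversely, put `m I = f 1_I`. Inf-homogeneity gives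
`m I ⊓ ⋀_{i ∈ I} x i = f (c ⊓ 1_I) ≤ f x` with `c = ⋀_{i ∈ I} x i`, and sup-homogeneity gives
`f x ≤ f (c ⊔ 1_J) = m J ⊔ ⋁_{i ∉ J} x i` with `c = ⋁_{i ∉ J} x i`. So `f x` lies between the
disjunctive and the conjunctive normal forms of `Su_m`, which coincide in a distributive lattice.
-/

open Finset

section Sugeno

variable {ι L : Type*} [Fintype ι] [DistribLattice L] [BoundedOrder L]

def sugeno (m : Finset ι → L) (x : ι → L) : L :=
  (univ : Finset ι).powerset.sup fun I => m I ⊓ I.inf x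

theorem inf_inf_le_sugeno (m : Finset ι → L) (x : ι → L) (I : Finset ι) :
    m I ⊓ I.inf x ≤ sugeno m x :=
  le_sup (f := fun I => m I ⊓ I.inf x) (mem_powerset.2 (subset_univ I))

theorem sugeno_sup_const {m : Finset ι → L} (hm : m univ = ⊤) (c : L) (x : ι → L) :
    sugeno m (fun i => c ⊔ x i) = c ⊔ sugeno m x := by
  have hsup : (univ : Finset ι).powerset.sup m = ⊤ :=
    top_unique (hm ▸ le_sup (mem_powerset_self univ))
  calc sugeno m (fun i => c ⊔ x i)
      = (univ : Finset ι).powerset.sup (fun I => m I ⊓ c ⊔ m I ⊓ I.inf x) := by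
        simp only [sugeno, ← inf_sup_distrib_left, inf_sup_left]
    _ = (univ : Finset ι).powerset.sup m ⊓ c ⊔ sugeno m x := by
        rw [sup_inf_distrib_right]; exact sup_sup
    _ = c ⊔ sugeno m x := by rw [hsup, top_inf_eq]

theorem sugeno_inf_const {m : Finset ι → L} (hm : m ∅ = ⊥) (c : L) (x : ι → L) :
    sugeno m (fun i => c ⊓ x i) = c ⊓ sugeno m x := by
  rw [sugeno, sugeno, sup_inf_distrib_left]
  refine sup_congr rfl fun I _ => ?_
  rcases I.eq_empty_or_nonempty with rfl | hI
  · simp [hm]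
  · have hc : I.inf (fun i => c ⊓ x i) = c ⊓ I.inf x :=
      (inf_inf (f := fun _ => c) (g := x)).trans (by rw [inf_const hI])
    rw [hc, inf_left_comm]

theorem le_sugeno_of_forall_le_sup [DecidableEq ι] {m : Finset ι → L} {x : ι → L} {a : L}
    (h : ∀ J, a ≤ m J ⊔ Jᶜ.sup x) : a ≤ sugeno m x := by
  suffices key : ∀ V : Finset ι, a ⊓ Vᶜ.inf x ≤ sugeno m x by
    simpa using key univ
  -- The bound at `J = Vᶜ` splits `a ⊓ Vᶜ.inf x` into a term of `sugeno m x` and the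
  -- cases `V.erase i` for `i ∈ V`.
  intro V
  induction V using Finset.strongInduction with
  | H V ih =>
    have ha : a ⊓ Vᶜ.inf x ≤ m Vᶜ ⊔ V.sup x := inf_le_left.trans (by simpa using h Vᶜ)
    calc a ⊓ Vᶜ.inf x
        ≤ (m Vᶜ ⊔ V.sup x) ⊓ (a ⊓ Vᶜ.inf x) := le_inf ha le_rfl
      _ = m Vᶜ ⊓ (a ⊓ Vᶜ.inf x) ⊔ V.sup fun i => x i ⊓ (a ⊓ Vᶜ.inf x) := by
        rw [inf_sup_right, sup_inf_distrib_right]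
      _ ≤ sugeno m x := by
        refine sup_le ((inf_le_inf_left _ inf_le_right).trans
          (inf_inf_le_sugeno m x Vᶜ)) (Finset.sup_le fun i hi => ?_)
        have := ih (V.erase i) (erase_ssubset hi)
        rwa [compl_erase, inf_insert, inf_left_comm] at this

end Sugeno

section BooleanHomogeneous

variable {ι L : Type*} [DistribLattice L] [BoundedOrder L]

def BooleanSupHomogeneous (f : (ι → L) → L) : Prop :=
  ∀ (c : L) (x : ι → L), (∀ i, x i = ⊥ ∨ x i = ⊤) → f (fun i => c ⊔ x i) = c ⊔ f x

def BooleanInfHomogeneous (f : (ι → L) → L) : Prop :=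
  ∀ (c : L) (x : ι → L), (∀ i, x i = ⊥ ∨ x i = ⊤) → f (fun i => c ⊓ x i) = c ⊓ f x

variable [DecidableEq ι]

def charVec (I : Finset ι) : ι → L := fun i => if i ∈ I then ⊤ else ⊥

theorem charVec_eq_bot_or_eq_top (I : Finset ι) (i : ι) :
    charVec I i = (⊥ : L) ∨ charVec I i = (⊤ : L) := by
  unfold charVec; split_ifs <;> simp

theorem charVec_mono : Monotone (charVec : Finset ι → ι → L) := fun I J hIJ i => by
  by_cases hi : i ∈ I
  · simp [charVec, hi, hIJ hi]
  · simp [charVec, hi]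

@[simp] theorem charVec_empty : (charVec ∅ : ι → L) = fun _ => ⊥ := by
  ext; simp [charVec]

@[simp] theorem charVec_univ [Fintype ι] : (charVec univ : ι → L) = fun _ => ⊤ := by
  ext; simp [charVec]

variable {f : (ι → L) → L}

theorem le_charVec_sup_sup_compl [Fintype ι] (hmono : Monotone f)
    (hsup : BooleanSupHomogeneous f) (x : ι → L) (J : Finset ι) :
    f x ≤ f (charVec J) ⊔ Jᶜ.sup x := by
  have hx : x ≤ fun i => Jᶜ.sup x ⊔ charVec J i := fun i => by
    by_cases hi : i ∈ J
    · simp [charVec, hi]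
    · exact le_sup_of_le_left (le_sup (mem_compl.2 hi))
  calc f x ≤ f (fun i => Jᶜ.sup x ⊔ charVec J i) := hmono hx
    _ = f (charVec J) ⊔ Jᶜ.sup x := by
      rw [hsup _ _ (charVec_eq_bot_or_eq_top J), sup_comm]

theorem charVec_inf_inf_le (hmono : Monotone f) (hinf : BooleanInfHomogeneous f)
    (x : ι → L) (I : Finset ι) : f (charVec I) ⊓ I.inf x ≤ f x := by
  have hx : (fun i => I.inf x ⊓ charVec I i) ≤ x := fun i => by
    by_cases hi : i ∈ I
    · simpa [charVec, hi] using inf_le hi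
    · simp [charVec, hi]
  calc f (charVec I) ⊓ I.inf x = f (fun i => I.inf x ⊓ charVec I i) := by
        rw [hinf _ _ (charVec_eq_bot_or_eq_top I), inf_comm]
    _ ≤ f x := hmono hx

theorem eq_sugeno_of_booleanHomogeneous [Fintype ι] (hmono : Monotone f)
    (hsup : BooleanSupHomogeneous f) (hinf : BooleanInfHomogeneous f) (x : ι → L) :
    f x = sugeno (fun I => f (charVec I)) x :=
  le_antisymm (le_sugeno_of_forall_le_sup (le_charVec_sup_sup_compl hmono hsup x))
    (Finset.sup_le fun I _ => charVec_inf_inf_le hmono hinf x I)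

end BooleanHomogeneous

theorem sugeno_iff_boolean_homogeneous {L : Type*} [DistribLattice L] [BoundedOrder L] {n : ℕ}
    (f : (Fin n → L) → L) (hmono : Monotone f)
    (hbot : f (fun _ => ⊥) = ⊥) (htop : f (fun _ => ⊤) = ⊤) :
    (∃ m : Finset (Fin n) → L, Monotone m ∧ m ∅ = ⊥ ∧ m Finset.univ = ⊤ ∧
      ∀ x : Fin n → L,
        f x = (Finset.univ : Finset (Fin n)).powerset.sup (fun I => m I ⊓ I.inf x)) ↔
    ((∀ (c : L) (x : Fin n → L), (∀ i, x i = ⊥ ∨ x i = ⊤) →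
        f (fun i => c ⊔ x i) = c ⊔ f x) ∧
     (∀ (c : L) (x : Fin n → L), (∀ i, x i = ⊥ ∨ x i = ⊤) →
        f (fun i => c ⊓ x i) = c ⊓ f x)) := by
  change (∃ m : Finset (Fin n) → L, Monotone m ∧ m ∅ = ⊥ ∧ m univ = ⊤ ∧
    ∀ x, f x = sugeno m x) ↔ BooleanSupHomogeneous f ∧ BooleanInfHomogeneous f
  constructor
  · rintro ⟨m, -, hm0, hm1, hf⟩
    refine ⟨fun c x _ => ?_, fun c x _ => ?_⟩
    · simp only [hf, sugeno_sup_const hm1]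
    · simp only [hf, sugeno_inf_const hm0]
  · rintro ⟨hsup, hinf⟩
    refine ⟨fun I => f (charVec I), hmono.comp charVec_mono, ?_, ?_,
      eq_sugeno_of_booleanHomogeneous hmono hsup hinf⟩
    · simpa using hbot
    · simpa using htop
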